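/- arXiv:2112.02375 — 8 statements merged into one kernel-verified Lean document; each statement's English description precedes it below -/
import Mathlib

section
/- Let N ≥ 1 and let A = [a_{jk}] be a real N×N matrix whose off-diagonal entries are nonnegative and each of whose columns sums to zero (Σ_k a_{ki} = 0 for every i). Fix an index i and let ψ := diag(A e_i) − A·diag(e_i) − diag(e_i)·Aᵀ. Then ψ is a symmetric positive semidefinite matrix. -/
open Matrix

/-!
Writing `c` for the `i`-th column of `A` and `eⱼ` for the standard basis vectors, one has
`ψ = diag c - c eᵢᵀ - eᵢ cᵀ`. Since `∑ⱼ cⱼ = 0` this equals `∑ⱼ cⱼ (eⱼ - eᵢ)(eⱼ - eᵢ)ᵀ`,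
in which the `j = i` term vanishes and every other coefficient `cⱼ = a_{ji}` is nonnegative.
So `ψ` is a nonnegative combination of Gram matrices, hence positive semidefinite, and a real
positive semidefinite matrix is symmetric.
-/

namespace Matrix

variable {n R : Type*} [Fintype n] [DecidableEq n]

theorem mul_diagonal_single_one [NonAssocSemiring R] (M : Matrix n n R) (i : n) :
    M * diagonal (Pi.single i 1) = vecMulVec (M.col i) (Pi.single i 1) := by
  ext a b
  simp +contextual [vecMulVec_apply, Pi.single_apply]

theorem diagonal_single_one_mul_transpose [CommSemiring R] (M : Matrix n n R) (i : n) :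
    diagonal (Pi.single i 1) * Mᵀ = vecMulVec (Pi.single i 1) (M.col i) := by
  rw [← diagonal_transpose, ← transpose_mul, mul_diagonal_single_one, transpose_vecMulVec]

theorem diagonal_sub_vecMulVec_single_eq_sum [CommRing R] (c : n → R) (hc : ∑ j, c j = 0)
    (i : n) :
    diagonal c - vecMulVec c (Pi.single i 1) - vecMulVec (Pi.single i 1) c =
      ∑ j, c j • vecMulVec (Pi.single j 1 - Pi.single i 1) (Pi.single j 1 - Pi.single i 1) := by
  ext a b
  simp only [Matrix.sub_apply, diagonal_apply, vecMulVec_apply, Matrix.sum_apply,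
    Matrix.smul_apply, Pi.sub_apply, Pi.single_apply, smul_eq_mul, mul_sub, mul_ite, mul_one,
    mul_zero]
  simp only [Finset.sum_sub_distrib, Finset.sum_ite_eq, Finset.mem_univ, if_true]
  split_ifs <;> simp_all [Finset.sum_ite_eq]

theorem posSemidef_sum_smul_vecMulVec_single_sub_single [CommRing R] [PartialOrder R]
    [StarRing R] [StarOrderedRing R] [TrivialStar R] (c : n → R) (i : n)
    (hc : ∀ j, j ≠ i → 0 ≤ c j) :
    (∑ j, c j • vecMulVec (Pi.single j 1 - Pi.single i 1 : n → R)
      (Pi.single j 1 - Pi.single i 1)).PosSemidef := by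
  refine posSemidef_sum _ fun j _ => ?_
  obtain rfl | hj := eq_or_ne j i
  · simpa using PosSemidef.zero
  · simpa using (posSemidef_vecMulVec_self_star (Pi.single j 1 - Pi.single i 1 : n → R)).smul
      (hc j hj)

end Matrix

theorem stmt_1_general (N : ℕ) (A : Matrix (Fin N) (Fin N) ℝ)
    (hoffdiag : ∀ j k : Fin N, j ≠ k → 0 ≤ A j k)
    (hcol : ∀ i : Fin N, ∑ k : Fin N, A k i = 0)
    (i : Fin N) (X : Fin N → ℝ) (hX : X = Pi.single i 1)
    (ψ : Matrix (Fin N) (Fin N) ℝ)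
    (hψ : ψ = Matrix.diagonal (A.mulVec X) - A * Matrix.diagonal X - Matrix.diagonal X * Aᵀ) :
    ψ.IsSymm ∧ ψ.PosSemidef := by
  subst hX hψ
  rw [mulVec_single_one, mul_diagonal_single_one, diagonal_single_one_mul_transpose,
    diagonal_sub_vecMulVec_single_eq_sum (A.col i) (hcol i)]
  have hpsd := posSemidef_sum_smul_vecMulVec_single_sub_single (A.col i) i
    (hoffdiag · i)
  exact ⟨isHermitian_iff_isSymm.mp hpsd.isHermitian, hpsd⟩

/-- If `A` is a rate matrix (nonnegative off-diagonal entries, columns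
summing to zero), then `ψ := diag(A e_i) − A·diag(e_i) − diag(e_i)·Aᵀ` is a symmetric
positive semidefinite matrix. -/
theorem stmt_1 (N : ℕ) (hN : 1 ≤ N) (A : Matrix (Fin N) (Fin N) ℝ)
    (hoffdiag : ∀ j k : Fin N, j ≠ k → 0 ≤ A j k)
    (hcol : ∀ i : Fin N, ∑ k : Fin N, A k i = 0)
    (i : Fin N) (X : Fin N → ℝ) (hX : X = Pi.single i 1)
    (ψ : Matrix (Fin N) (Fin N) ℝ)
    (hψ : ψ = Matrix.diagonal (A.mulVec X) - A * Matrix.diagonal X - Matrix.diagonal X * Aᵀ) :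
    ψ.IsSymm ∧ ψ.PosSemidef :=
  stmt_1_general N A hoffdiag hcol i X hX ψ hψ
end

section
/- Let N ≥ 1, let c ∈ (0,1), and let A = [a_{jk}] be a real N×N matrix with a_{jk} ∈ [c, c⁻¹] for all j ≠ k and each column summing to zero (Σ_k a_{ki} = 0 for every i). Fix an index i and let ψ := diag(A e_i) − A·diag(e_i) − diag(e_i)·Aᵀ. Then for z ∈ ℝ^N, zᵀ ψ z = 0 if and only if z is a constant vector, i.e. z_k = z_i for all k (equivalently, z is a scalar multiple of the all-ones vector). -/
/-!
Expanding the quadratic form gives `zᵀ ψ z = ∑ₖ aₖᵢ zₖ² - 2 zᵢ ∑ₖ aₖᵢ zₖ`, and since the `i`-th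
column of `A` sums to zero this equals `∑ₖ aₖᵢ (zₖ - zᵢ)²`. The weights `aₖᵢ` with `k ≠ i` are at
least `c > 0`, so this sum of nonnegative terms vanishes exactly when every `zₖ` equals `zᵢ`.
-/

open Matrix

section
variable {ι : Type*} [Fintype ι]

theorem dotProduct_diagonal_single_sub_mulVec [DecidableEq ι] {R : Type*} [CommRing R]
    (A : Matrix ι ι R) (i : ι) (z : ι → R) :
    z ⬝ᵥ (diagonal (A *ᵥ Pi.single i 1) - A * diagonal (Pi.single i 1)
      - diagonal (Pi.single i 1) * Aᵀ) *ᵥ z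
      = ∑ k, A k i * z k ^ 2 - 2 * z i * ∑ k, A k i * z k := by
  have hdiag : z ⬝ᵥ diagonal (A *ᵥ Pi.single i 1) *ᵥ z = ∑ k, A k i * z k ^ 2 := by
    simp only [dotProduct, mulVec_diagonal, mulVec_single_one, col_apply]
    exact Finset.sum_congr rfl fun _ _ => by ring
  have hcross : z ⬝ᵥ (A * diagonal (Pi.single i 1)) *ᵥ z = z i * ∑ k, A k i * z k := by
    have : diagonal (Pi.single i 1) *ᵥ z = Pi.single i (z i) := by
      ext k; rw [mulVec_diagonal]; rcases eq_or_ne k i with rfl | hk <;> simp [*]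
    rw [← mulVec_mulVec, this, dotProduct_mulVec, dotProduct_single, vecMul, dotProduct,
      Finset.sum_mul, Finset.mul_sum]
    exact Finset.sum_congr rfl fun _ _ => by ring
  have htrans : diagonal (Pi.single i (1 : R)) * Aᵀ = (A * diagonal (Pi.single i 1))ᵀ := by
    rw [transpose_mul, diagonal_transpose]
  rw [sub_mulVec, sub_mulVec, dotProduct_sub, dotProduct_sub, htrans,
    dotProduct_transpose_mulVec, hdiag, hcross]
  ring

theorem dotProduct_diagonal_single_sub_mulVec_of_sum_col_eq_zero [DecidableEq ι] {R : Type*}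
    [CommRing R] (A : Matrix ι ι R) (i : ι) (hcol : ∑ k, A k i = 0) (z : ι → R) :
    z ⬝ᵥ (diagonal (A *ᵥ Pi.single i 1) - A * diagonal (Pi.single i 1)
      - diagonal (Pi.single i 1) * Aᵀ) *ᵥ z = ∑ k, A k i * (z k - z i) ^ 2 := by
  have hexpand : ∑ k, A k i * (z k - z i) ^ 2
      = ∑ k, A k i * z k ^ 2 - 2 * z i * ∑ k, A k i * z k + z i ^ 2 * ∑ k, A k i := by
    simp only [Finset.mul_sum, ← Finset.sum_sub_distrib, ← Finset.sum_add_distrib]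
    exact Finset.sum_congr rfl fun _ _ => by ring
  rw [hexpand, hcol, mul_zero, add_zero, dotProduct_diagonal_single_sub_mulVec]

theorem sum_mul_sq_sub_eq_zero_iff (w z : ι → ℝ) (i : ι) (hw : ∀ k, k ≠ i → 0 < w k) :
    ∑ k, w k * (z k - z i) ^ 2 = 0 ↔ ∀ k, z k = z i := by
  have hnonneg : ∀ k, 0 ≤ w k * (z k - z i) ^ 2 := fun k => by
    rcases eq_or_ne k i with rfl | hk
    · simp
    · exact mul_nonneg (hw k hk).le (sq_nonneg _)
  rw [Finset.sum_eq_zero_iff_of_nonneg fun k _ => hnonneg k]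
  refine forall_congr' fun k => ?_
  rcases eq_or_ne k i with rfl | hk
  · simp
  · simp [(hw k hk).ne', sub_eq_zero]

end

theorem stmt_3_general (N : ℕ) (c : ℝ) (hc : c ∈ Set.Ioo (0 : ℝ) 1)
    (A : Matrix (Fin N) (Fin N) ℝ)
    (hbound : ∀ j k : Fin N, j ≠ k → A j k ∈ Set.Icc c c⁻¹)
    (hcol : ∀ i : Fin N, ∑ k : Fin N, A k i = 0)
    (i : Fin N) (X : Fin N → ℝ) (hX : X = Pi.single i 1)
    (ψ : Matrix (Fin N) (Fin N) ℝ)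
    (hψ : ψ = Matrix.diagonal (A.mulVec X) - A * Matrix.diagonal X - Matrix.diagonal X * Aᵀ) :
    ∀ z : Fin N → ℝ, (z ⬝ᵥ ψ.mulVec z = 0 ↔ ∀ k : Fin N, z k = z i) := by
  intro z
  subst hX hψ
  rw [dotProduct_diagonal_single_sub_mulVec_of_sum_col_eq_zero A i (hcol i)]
  exact sum_mul_sq_sub_eq_zero_iff _ z i fun k hk => hc.1.trans_le (hbound k i hk).1

/-- With `a_{jk} ∈ [c, c⁻¹]` off the diagonal (for some `c ∈ (0,1)`) and
columns of `A` summing to zero, for `ψ := diag(A e_i) − A·diag(e_i) − diag(e_i)·Aᵀ`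
and `z ∈ ℝ^N` we have `zᵀ ψ z = 0` iff `z` is a constant vector. -/
theorem stmt_3 (N : ℕ) (hN : 1 ≤ N) (c : ℝ) (hc : c ∈ Set.Ioo (0 : ℝ) 1)
    (A : Matrix (Fin N) (Fin N) ℝ)
    (hbound : ∀ j k : Fin N, j ≠ k → A j k ∈ Set.Icc c c⁻¹)
    (hcol : ∀ i : Fin N, ∑ k : Fin N, A k i = 0)
    (i : Fin N) (X : Fin N → ℝ) (hX : X = Pi.single i 1)
    (ψ : Matrix (Fin N) (Fin N) ℝ)
    (hψ : ψ = Matrix.diagonal (A.mulVec X) - A * Matrix.diagonal X - Matrix.diagonal X * Aᵀ) :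
    ∀ z : Fin N → ℝ, (z ⬝ᵥ ψ.mulVec z = 0 ↔ ∀ k : Fin N, z k = z i) :=
  stmt_3_general N c hc A hbound hcol i X hX ψ hψ
end

section
/- Let N ≥ 1, let A = [a_{jk}] be any real N×N matrix, fix an index i, and let ψ := diag(A e_i) − A·diag(e_i) − diag(e_i)·Aᵀ. Let ψ⁺ be a Moore–Penrose inverse of ψ, i.e. an N×N real matrix satisfying ψψ⁺ψ = ψ, ψ⁺ψψ⁺ = ψ⁺, (ψψ⁺)ᵀ = ψψ⁺ and (ψ⁺ψ)ᵀ = ψ⁺ψ. Then for every index j such that e_jᵀ A e_i ≠ 0, one has ψψ⁺(e_j − e_i) = ψ⁺ψ(e_j − e_i) = e_j − e_i. -/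
/-!
The matrix `ψ` is symmetric, and for `j ≠ i` its `j`-th column is `a_{ji} (e_j − e_i)`, so
`e_j − e_i` lies in the range of `ψ` as soon as `a_{ji} ≠ 0`. The projections `ψψ⁺` and `ψ⁺ψ`
fix the ranges of `ψ` and of `ψᵀ` respectively, and these ranges coincide.
-/

open Matrix

namespace Matrix

section Penrose

variable {m n R : Type*} [Fintype m] [Fintype n] [CommSemiring R]
  {M : Matrix m n R} {P : Matrix n m R}

theorem mul_mulVec_mulVec_of_mul_mul_eq (h : M * P * M = M) (w : n → R) :
    (M * P) *ᵥ (M *ᵥ w) = M *ᵥ w := by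
  rw [mulVec_mulVec, h]

theorem mul_mul_transpose_of_mul_mul_eq (h : M * P * M = M) (hsymm : (P * M)ᵀ = P * M) :
    P * M * Mᵀ = Mᵀ := by
  rw [← hsymm, ← transpose_mul, ← Matrix.mul_assoc, h]

theorem mul_mulVec_transpose_mulVec_of_mul_mul_eq (h : M * P * M = M)
    (hsymm : (P * M)ᵀ = P * M) (w : m → R) :
    (P * M) *ᵥ (Mᵀ *ᵥ w) = Mᵀ *ᵥ w := by
  rw [mulVec_mulVec, mul_mul_transpose_of_mul_mul_eq h hsymm]

end Penrose

section Psi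

variable {n R : Type*} [Fintype n] [DecidableEq n] [CommRing R]

def psi (A : Matrix n n R) (i : n) : Matrix n n R :=
  diagonal (A *ᵥ Pi.single i 1) - A * diagonal (Pi.single i 1) - diagonal (Pi.single i 1) * Aᵀ

theorem psi_transpose (A : Matrix n n R) (i : n) : (psi A i)ᵀ = psi A i := by
  simp only [psi, transpose_sub, transpose_mul, transpose_transpose, diagonal_transpose]
  abel

theorem psi_mulVec_single_one (A : Matrix n n R) {i j : n} (hji : j ≠ i) :
    psi A i *ᵥ Pi.single j 1 = A j i • (Pi.single j 1 - Pi.single i 1) := by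
  ext k
  by_cases hkj : k = j <;> by_cases hki : k = i <;>
    simp_all [psi]

theorem exists_psi_mulVec_eq_single_sub_single {K : Type*} [Field K] (A : Matrix n n K)
    {i j : n} (hA : A j i ≠ 0) :
    ∃ w, psi A i *ᵥ w = Pi.single j 1 - Pi.single i 1 := by
  by_cases hji : j = i
  · exact ⟨0, by simp [hji]⟩
  refine ⟨(A j i)⁻¹ • Pi.single j 1, ?_⟩
  rw [mulVec_smul, psi_mulVec_single_one A hji, inv_smul_smul₀ hA]

end Psi

end Matrix

theorem stmt_7_general (N : ℕ) (A : Matrix (Fin N) (Fin N) ℝ)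
    (i : Fin N) (X : Fin N → ℝ) (hX : X = Pi.single i 1)
    (ψ ψp : Matrix (Fin N) (Fin N) ℝ)
    (hψ : ψ = Matrix.diagonal (A.mulVec X) - A * Matrix.diagonal X - Matrix.diagonal X * Aᵀ)
    (h1 : ψ * ψp * ψ = ψ) (h4 : (ψp * ψ)ᵀ = ψp * ψ) :
    ∀ j : Fin N, A j i ≠ 0 →
      (ψ * ψp).mulVec ((Pi.single j 1 : Fin N → ℝ) - Pi.single i 1) =
        (Pi.single j 1 : Fin N → ℝ) - Pi.single i 1 ∧
      (ψp * ψ).mulVec ((Pi.single j 1 : Fin N → ℝ) - Pi.single i 1) =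
        (Pi.single j 1 : Fin N → ℝ) - Pi.single i 1 := by
  intro j hj
  obtain rfl : ψ = psi A i := by rw [hψ, hX, psi]
  obtain ⟨w, hw⟩ := exists_psi_mulVec_eq_single_sub_single A hj
  have hfix := mul_mulVec_transpose_mulVec_of_mul_mul_eq h1 h4 w
  rw [psi_transpose] at hfix
  exact ⟨hw ▸ mul_mulVec_mulVec_of_mul_mul_eq h1 w, hw ▸ hfix⟩

/-- For any real `N×N` matrix `A`,
`ψ := diag(A e_i) − A·diag(e_i) − diag(e_i)·Aᵀ`, and any Moore–Penrose inverse `ψ⁺`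
of `ψ` (satisfying the four Penrose equations), for every index `j` with
`e_jᵀ A e_i ≠ 0` we have `ψψ⁺(e_j − e_i) = ψ⁺ψ(e_j − e_i) = e_j − e_i`. -/
theorem stmt_7 (N : ℕ) (hN : 1 ≤ N) (A : Matrix (Fin N) (Fin N) ℝ)
    (i : Fin N) (X : Fin N → ℝ) (hX : X = Pi.single i 1)
    (ψ ψp : Matrix (Fin N) (Fin N) ℝ)
    (hψ : ψ = Matrix.diagonal (A.mulVec X) - A * Matrix.diagonal X - Matrix.diagonal X * Aᵀ)
    (h1 : ψ * ψp * ψ = ψ) (h2 : ψp * ψ * ψp = ψp)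
    (h3 : (ψ * ψp)ᵀ = ψ * ψp) (h4 : (ψp * ψ)ᵀ = ψp * ψ) :
    ∀ j : Fin N, A j i ≠ 0 →
      (ψ * ψp).mulVec ((Pi.single j 1 : Fin N → ℝ) - Pi.single i 1) =
        (Pi.single j 1 : Fin N → ℝ) - Pi.single i 1 ∧
      (ψp * ψ).mulVec ((Pi.single j 1 : Fin N → ℝ) - Pi.single i 1) =
        (Pi.single j 1 : Fin N → ℝ) - Pi.single i 1 :=
  stmt_7_general N A i X hX ψ ψp hψ h1 h4
end

section
/- Let N ≥ 1, let c ∈ (0,1), and let A = [a_{jk}] be a real N×N matrix with a_{jk} ∈ [c, c⁻¹] for all j ≠ k and each column summing to zero (Σ_k a_{ki} = 0 for every i). Fix an index i (write X = e_i) and let ψ := diag(AX) − A·diag(X) − diag(X)·Aᵀ, with ‖z‖_X := √(zᵀψz). Let z ∈ ℝ^N satisfy ‖z‖_X ≠ 0, and let ε satisfy 0 < ε < c^{3/2} N^{−3/2}. If zᵀ ψ e_j ≥ −ε‖z‖_X for all j = 1,…,N, then zᵀ ψ X ≤ −ε‖z‖_X. -/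
/-!
With `X = e_i` and `aⱼ = A j i`, the zero column sum turns `ψ` into the Laplacian of the star
graph centred at `i` with edge weights `aⱼ`: `zᵀψv = ∑ⱼ aⱼ (zⱼ - zᵢ)(vⱼ - vᵢ)`. With
`wⱼ = zⱼ - zᵢ` this gives `‖z‖²_X = ∑ aⱼwⱼ²`, `zᵀψeⱼ = aⱼwⱼ` for `j ≠ i` and `zᵀψX = -∑ aⱼwⱼ`.
By pigeonhole some `j ≠ i` carries at least `1/N` of `‖z‖²_X`, so `|wⱼ| ≥ √(c/N) ‖z‖_X`. The
bound on `ε` rules out `wⱼ < 0`, hence `aⱼwⱼ ≥ c √(c/N) ‖z‖_X > Nε‖z‖_X`, and this single term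
outweighs the other terms, each of which is at least `-ε‖z‖_X`.
-/

open Matrix

section

variable {ι : Type*} [Fintype ι] [DecidableEq ι]

def starLaplacian (A : Matrix ι ι ℝ) (i : ι) : Matrix ι ι ℝ :=
  diagonal (A *ᵥ Pi.single i 1) - A * diagonal (Pi.single i 1) - diagonal (Pi.single i 1) * Aᵀ

theorem starLaplacian_mulVec (A : Matrix ι ι ℝ) (i : ι) (v : ι → ℝ) :
    starLaplacian A i *ᵥ v =
      (fun j => A j i * (v j - v i)) - Pi.single i (∑ k, A k i * v k) := by
  have hproj : ∀ u : ι → ℝ, diagonal (Pi.single i 1) *ᵥ u = Pi.single i (u i) := by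
    intro u; ext j; rcases eq_or_ne j i with rfl | hj <;> simp [mulVec_diagonal, *]
  ext j
  rw [starLaplacian, sub_mulVec, sub_mulVec, ← mulVec_mulVec, ← mulVec_mulVec, hproj, hproj,
    mulVec_single]
  rcases eq_or_ne j i with rfl | hj
  · simp [mulVec_diagonal, mulVec_transpose, vecMul, dotProduct, mul_sub, mul_comm]
  · simp [hj, mulVec_diagonal, mul_sub, mul_comm]

theorem dotProduct_starLaplacian_mulVec (A : Matrix ι ι ℝ) (i : ι) (hA : ∑ k, A k i = 0)
    (z v : ι → ℝ) :
    z ⬝ᵥ starLaplacian A i *ᵥ v = ∑ j, A j i * (v j - v i) * (z j - z i) := by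
  have hcol : ∑ k, A k i * v k = ∑ k, A k i * (v k - v i) := by
    simp only [mul_sub, Finset.sum_sub_distrib, ← Finset.sum_mul, hA, zero_mul, sub_zero]
  rw [starLaplacian_mulVec, dotProduct_sub, dotProduct_single, hcol, Finset.mul_sum]
  simp only [dotProduct, ← Finset.sum_sub_distrib]
  exact Finset.sum_congr rfl fun j _ => by ring

theorem dotProduct_starLaplacian_mulVec_self (A : Matrix ι ι ℝ) (i : ι) (hA : ∑ k, A k i = 0)
    (z : ι → ℝ) :
    z ⬝ᵥ starLaplacian A i *ᵥ z = ∑ j, A j i * (z j - z i) ^ 2 := by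
  rw [dotProduct_starLaplacian_mulVec A i hA]
  exact Finset.sum_congr rfl fun j _ => by ring

theorem dotProduct_starLaplacian_mulVec_single_of_ne (A : Matrix ι ι ℝ) {i j : ι} (hji : j ≠ i)
    (hA : ∑ k, A k i = 0) (z : ι → ℝ) :
    z ⬝ᵥ starLaplacian A i *ᵥ Pi.single j 1 = A j i * (z j - z i) := by
  rw [dotProduct_starLaplacian_mulVec A i hA, Finset.sum_eq_single j]
  · simp [hji.symm]
  · intro k _ hkj
    simp [hkj, hji.symm]
  · simp

theorem dotProduct_starLaplacian_mulVec_single_self (A : Matrix ι ι ℝ) (i : ι)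
    (hA : ∑ k, A k i = 0) (z : ι → ℝ) :
    z ⬝ᵥ starLaplacian A i *ᵥ Pi.single i 1 = -∑ j, A j i * (z j - z i) := by
  rw [dotProduct_starLaplacian_mulVec A i hA, ← Finset.sum_neg_distrib]
  refine Finset.sum_congr rfl fun j _ => ?_
  rcases eq_or_ne j i with rfl | hji
  · simp
  · simp [hji]

end

theorem Real.rpow_three_halves_mul_rpow_neg_three_halves {x y : ℝ} (hx : 0 ≤ x) (hy : 0 ≤ y) :
    x ^ ((3 : ℝ) / 2) * y ^ (-(3 : ℝ) / 2) = x / y * √(x / y) := by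
  rw [neg_div, Real.rpow_neg hy, ← div_eq_mul_inv, ← Real.div_rpow hx hy,
    show (3 : ℝ) / 2 = 1 + 1 / 2 by norm_num, Real.rpow_add' (div_nonneg hx hy) (by norm_num),
    Real.rpow_one, Real.sqrt_eq_rpow]

section

variable {ι : Type*} [Fintype ι]

theorem le_sum_of_neg_le_of_card_mul_le {f : ι → ℝ} {b : ℝ} {j : ι} (hf : ∀ k, -b ≤ f k)
    (hj : Fintype.card ι * b ≤ f j) : b ≤ ∑ k, f k := by
  have hshift : f j + b ≤ ∑ k, (f k + b) :=
    Finset.single_le_sum (fun k _ => neg_le_iff_add_nonneg.mp (hf k)) (Finset.mem_univ j)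
  rw [Finset.sum_add_distrib, Finset.sum_const, Finset.card_univ, nsmul_eq_mul] at hshift
  linarith

theorem exists_sqrt_mul_sqrt_le_abs {a w : ι → ℝ} {c : ℝ} (i : ι) (hc : 0 < c)
    (ha : ∀ k ≠ i, a k ≤ c⁻¹) (hwi : w i = 0) (hT : 0 < ∑ k, a k * w k ^ 2) :
    ∃ j ≠ i, √(c / Fintype.card ι) * √(∑ k, a k * w k ^ 2) ≤ |w j| := by
  set T := ∑ k, a k * w k ^ 2
  have hn : (0 : ℝ) < Fintype.card ι := Nat.cast_pos.mpr (Fintype.card_pos_iff.mpr ⟨i⟩)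
  obtain ⟨j, -, hj⟩ : ∃ j ∈ Finset.univ, T / Fintype.card ι ≤ a j * w j ^ 2 := by
    refine Finset.exists_le_of_sum_le (Finset.univ_nonempty_iff.mpr ⟨i⟩) ?_
    rw [Finset.sum_const, Finset.card_univ, nsmul_eq_mul, mul_div_cancel₀ _ hn.ne']
  have hji : j ≠ i := by
    rintro rfl
    rw [hwi, zero_pow two_ne_zero, mul_zero] at hj
    exact hj.not_gt (div_pos hT hn)
  refine ⟨j, hji, ?_⟩
  have hwj : c / Fintype.card ι * T ≤ w j ^ 2 :=
    calc c / Fintype.card ι * T = c * (T / Fintype.card ι) := by ring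
      _ ≤ c * (a j * w j ^ 2) := mul_le_mul_of_nonneg_left hj hc.le
      _ ≤ c * (c⁻¹ * w j ^ 2) := by gcongr; exact ha j hji
      _ = w j ^ 2 := by rw [← mul_assoc, mul_inv_cancel₀ hc.ne', one_mul]
  rw [← Real.sqrt_mul (div_nonneg hc.le hn.le), ← Real.sqrt_sq_eq_abs]
  exact Real.sqrt_le_sqrt hwj

theorem mul_sqrt_le_sum_mul {a w : ι → ℝ} {c ε : ℝ} (i : ι) (hc : 0 < c) (hε : 0 < ε)
    (ha : ∀ k ≠ i, a k ∈ Set.Icc c c⁻¹) (hwi : w i = 0)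
    (hεc : ε * Fintype.card ι < c * √(c / Fintype.card ι))
    (hS : 0 < √(∑ k, a k * w k ^ 2))
    (hflux : ∀ k, -ε * √(∑ k, a k * w k ^ 2) ≤ a k * w k) :
    ε * √(∑ k, a k * w k ^ 2) ≤ ∑ k, a k * w k := by
  set S := √(∑ k, a k * w k ^ 2)
  set t := √(c / Fintype.card ι)
  obtain ⟨j, hji, hwj⟩ :=
    exists_sqrt_mul_sqrt_le_abs i hc (fun k hk => (ha k hk).2) hwi (Real.sqrt_pos.mp hS)
  obtain ⟨hcj, -⟩ := ha j hji
  have hn : (1 : ℝ) ≤ Fintype.card ι := Nat.one_le_cast.mpr (Fintype.card_pos_iff.mpr ⟨i⟩)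
  have hε_lt : ε < c * t := by nlinarith
  have hwj_nonneg : 0 ≤ w j := by
    by_contra! hneg
    rw [abs_of_neg hneg] at hwj
    have := hflux j
    nlinarith
  rw [abs_of_nonneg hwj_nonneg] at hwj
  refine le_sum_of_neg_le_of_card_mul_le (j := j)
    (fun k => by simpa only [neg_mul] using hflux k) ?_
  calc Fintype.card ι * (ε * S) = ε * Fintype.card ι * S := by ring
    _ ≤ c * t * S := by gcongr
    _ ≤ c * w j := by rw [mul_assoc]; gcongr
    _ ≤ a j * w j := by gcongr

end

theorem stmt_8_general (N : ℕ) (c : ℝ) (hc : c ∈ Set.Ioo (0 : ℝ) 1)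
    (A : Matrix (Fin N) (Fin N) ℝ)
    (hbound : ∀ j k : Fin N, j ≠ k → A j k ∈ Set.Icc c c⁻¹)
    (hcol : ∀ i : Fin N, ∑ k : Fin N, A k i = 0)
    (i : Fin N) (X : Fin N → ℝ) (hX : X = Pi.single i 1)
    (ψ : Matrix (Fin N) (Fin N) ℝ)
    (hψ : ψ = Matrix.diagonal (A.mulVec X) - A * Matrix.diagonal X - Matrix.diagonal X * Aᵀ)
    (z : Fin N → ℝ) (hz : Real.sqrt (z ⬝ᵥ ψ.mulVec z) ≠ 0)
    (ε : ℝ) (hε0 : 0 < ε)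
    (hε1 : ε < c ^ ((3 : ℝ) / 2) * (N : ℝ) ^ (-(3 : ℝ) / 2))
    (hj : ∀ j : Fin N,
      z ⬝ᵥ ψ.mulVec (Pi.single j 1) ≥ -ε * Real.sqrt (z ⬝ᵥ ψ.mulVec z)) :
    z ⬝ᵥ ψ.mulVec X ≤ -ε * Real.sqrt (z ⬝ᵥ ψ.mulVec z) := by
  have hψ' : ψ = starLaplacian A i := by rw [hψ, hX]; rfl
  subst hψ' hX
  have hN : (0 : ℝ) < N := Nat.cast_pos.mpr i.pos
  rw [Real.rpow_three_halves_mul_rpow_neg_three_halves hc.1.le hN.le, ← mul_div_right_comm,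
    lt_div_iff₀ hN] at hε1
  have hflux : ∀ k, -ε * √(z ⬝ᵥ starLaplacian A i *ᵥ z) ≤ A k i * (z k - z i) := by
    intro k
    rcases eq_or_ne k i with rfl | hki
    · rw [sub_self, mul_zero, neg_mul, neg_nonpos]
      positivity
    · simpa only [dotProduct_starLaplacian_mulVec_single_of_ne A hki (hcol i)] using hj k
  rw [dotProduct_starLaplacian_mulVec_single_self A i (hcol i), neg_mul, neg_le_neg_iff]
  rw [dotProduct_starLaplacian_mulVec_self A i (hcol i)] at hz hflux ⊢
  exact mul_sqrt_le_sum_mul i hc.1 hε0 (fun k hk => hbound k i hk) (sub_self _)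
    (by rwa [Fintype.card_fin]) ((Real.sqrt_nonneg _).lt_of_ne' hz) hflux

/-- Suppose `c ∈ (0,1)`, off-diagonal entries of `A` lie in `[c, c⁻¹]`
and columns of `A` sum to zero. With `X = e_i`,
`ψ := diag(AX) − A·diag(X) − diag(X)·Aᵀ` and `‖z‖_X := √(zᵀψz)`, if `‖z‖_X ≠ 0`,
`0 < ε < c^{3/2} N^{−3/2}`, and `zᵀ ψ e_j ≥ −ε‖z‖_X` for all `j`, then
`zᵀ ψ X ≤ −ε‖z‖_X`. -/
theorem stmt_8 (N : ℕ) (hN : 1 ≤ N) (c : ℝ) (hc : c ∈ Set.Ioo (0 : ℝ) 1)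
    (A : Matrix (Fin N) (Fin N) ℝ)
    (hbound : ∀ j k : Fin N, j ≠ k → A j k ∈ Set.Icc c c⁻¹)
    (hcol : ∀ i : Fin N, ∑ k : Fin N, A k i = 0)
    (i : Fin N) (X : Fin N → ℝ) (hX : X = Pi.single i 1)
    (ψ : Matrix (Fin N) (Fin N) ℝ)
    (hψ : ψ = Matrix.diagonal (A.mulVec X) - A * Matrix.diagonal X - Matrix.diagonal X * Aᵀ)
    (z : Fin N → ℝ) (hz : Real.sqrt (z ⬝ᵥ ψ.mulVec z) ≠ 0)
    (ε : ℝ) (hε0 : 0 < ε)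
    (hε1 : ε < c ^ ((3 : ℝ) / 2) * (N : ℝ) ^ (-(3 : ℝ) / 2))
    (hj : ∀ j : Fin N,
      z ⬝ᵥ ψ.mulVec (Pi.single j 1) ≥ -ε * Real.sqrt (z ⬝ᵥ ψ.mulVec z)) :
    z ⬝ᵥ ψ.mulVec X ≤ -ε * Real.sqrt (z ⬝ᵥ ψ.mulVec z) :=
  stmt_8_general N c hc A hbound hcol i X hX ψ hψ z hz ε hε0 hε1 hj
end

section
/- Let N ≥ 1, let c ∈ (0,1), and let A = [a_{jk}] be a real N×N matrix with a_{jk} ∈ [c, c⁻¹] for all j ≠ k and each column summing to zero (Σ_k a_{ki} = 0 for every i). Fix an index i and let ψ := diag(A e_i) − A·diag(e_i) − diag(e_i)·Aᵀ. Then for every z ∈ ℝ^N, c·Σ_{k ≠ i}(z_k − z_i)² ≤ zᵀ ψ z ≤ c⁻¹·Σ_{k ≠ i}(z_k − z_i)². -/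
open Matrix

/-!
Writing `e = Pi.single i 1`, the matrix `ψ = diag(A e) − A·diag(e) − diag(e)·Aᵀ` has quadratic form
`∑ₖ aₖᵢ zₖ² − 2 zᵢ ∑ₖ aₖᵢ zₖ`. Adding `zᵢ² ∑ₖ aₖᵢ = 0` completes the square, so
`zᵀψz = ∑_{k ≠ i} aₖᵢ (zₖ − zᵢ)²`, and the bounds `c ≤ aₖᵢ ≤ c⁻¹` apply term by term.
-/

theorem dotProduct_mulVec_eq_sum_mul_sq_sub {n R : Type*} [Fintype n] [DecidableEq n]
    [CommRing R] (A : Matrix n n R) (i : n) (hcol : ∑ k, A k i = 0) (z : n → R) :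
    z ⬝ᵥ (diagonal (A *ᵥ Pi.single i 1) - A * diagonal (Pi.single i 1)
      - diagonal (Pi.single i 1) * Aᵀ) *ᵥ z = ∑ k, A k i * (z k - z i) ^ 2 := by
  rw [diagonal_single, mulVec_single_one, sub_mulVec, sub_mulVec, ← mulVec_mulVec,
    ← mulVec_mulVec, single_mulVec_eq, single_mulVec_eq, mulVec_smul, mulVec_single_one,
    mulVec_transpose, dotProduct_sub, dotProduct_sub, dotProduct_smul, dotProduct_smul,
    dotProduct_single]
  simp only [dotProduct, mulVec_diagonal, col_apply, one_mul, smul_eq_mul, vecMul, mul_one]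
  have hsq : ∑ k, A k i * (z k - z i) ^ 2
      = ∑ k, z k * (A k i * z k) - 2 * z i * ∑ k, z k * A k i + z i ^ 2 * ∑ k, A k i := by
    simp only [Finset.mul_sum, ← Finset.sum_sub_distrib, ← Finset.sum_add_distrib]
    exact Finset.sum_congr rfl fun k _ => by ring
  rw [hsq, hcol]
  ring

theorem sum_mul_sq_sub_eq_sum_filter_ne {n R : Type*} [Fintype n] [DecidableEq n] [CommRing R]
    (w z : n → R) (i : n) :
    ∑ k, w k * (z k - z i) ^ 2 = ∑ k ∈ Finset.univ.filter (· ≠ i), w k * (z k - z i) ^ 2 := by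
  refine (Finset.sum_filter_of_ne ?_).symm
  rintro k - hk rfl
  simp at hk

theorem mul_sum_le_sum_mul_le_mul_sum {ι R : Type*} [Semiring R] [PartialOrder R]
    [IsOrderedRing R] (s : Finset ι) (w f : ι → R) {a b : R}
    (hw : ∀ k ∈ s, w k ∈ Set.Icc a b) (hf : ∀ k ∈ s, 0 ≤ f k) :
    a * ∑ k ∈ s, f k ≤ ∑ k ∈ s, w k * f k ∧ ∑ k ∈ s, w k * f k ≤ b * ∑ k ∈ s, f k := by
  rw [Finset.mul_sum, Finset.mul_sum]
  exact ⟨Finset.sum_le_sum fun k hk => mul_le_mul_of_nonneg_right (hw k hk).1 (hf k hk),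
    Finset.sum_le_sum fun k hk => mul_le_mul_of_nonneg_right (hw k hk).2 (hf k hk)⟩

theorem stmt_10_general (N : ℕ) (c : ℝ)
    (A : Matrix (Fin N) (Fin N) ℝ)
    (hbound : ∀ j k : Fin N, j ≠ k → A j k ∈ Set.Icc c c⁻¹)
    (hcol : ∀ i : Fin N, ∑ k : Fin N, A k i = 0)
    (i : Fin N) (X : Fin N → ℝ) (hX : X = Pi.single i 1)
    (ψ : Matrix (Fin N) (Fin N) ℝ)
    (hψ : ψ = Matrix.diagonal (A.mulVec X) - A * Matrix.diagonal X - Matrix.diagonal X * Aᵀ) :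
    ∀ z : Fin N → ℝ,
      c * ∑ k ∈ Finset.univ.filter (· ≠ i), (z k - z i) ^ 2 ≤ z ⬝ᵥ ψ.mulVec z ∧
      z ⬝ᵥ ψ.mulVec z ≤ c⁻¹ * ∑ k ∈ Finset.univ.filter (· ≠ i), (z k - z i) ^ 2 := by
  intro z
  subst hX hψ
  rw [dotProduct_mulVec_eq_sum_mul_sq_sub A i (hcol i), sum_mul_sq_sub_eq_sum_filter_ne]
  exact mul_sum_le_sum_mul_le_mul_sum _ _ _
    (fun k hk => hbound k i (Finset.mem_filter.1 hk).2) fun k _ => sq_nonneg _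

/-- With `c ∈ (0,1)`, off-diagonal entries of `A` in `[c, c⁻¹]` and
columns of `A` summing to zero, for `ψ := diag(A e_i) − A·diag(e_i) − diag(e_i)·Aᵀ`
and every `z ∈ ℝ^N`:
`c·Σ_{k ≠ i}(z_k − z_i)² ≤ zᵀ ψ z ≤ c⁻¹·Σ_{k ≠ i}(z_k − z_i)²`. -/
theorem stmt_10 (N : ℕ) (hN : 1 ≤ N) (c : ℝ) (hc : c ∈ Set.Ioo (0 : ℝ) 1)
    (A : Matrix (Fin N) (Fin N) ℝ)
    (hbound : ∀ j k : Fin N, j ≠ k → A j k ∈ Set.Icc c c⁻¹)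
    (hcol : ∀ i : Fin N, ∑ k : Fin N, A k i = 0)
    (i : Fin N) (X : Fin N → ℝ) (hX : X = Pi.single i 1)
    (ψ : Matrix (Fin N) (Fin N) ℝ)
    (hψ : ψ = Matrix.diagonal (A.mulVec X) - A * Matrix.diagonal X - Matrix.diagonal X * Aᵀ) :
    ∀ z : Fin N → ℝ,
      c * ∑ k ∈ Finset.univ.filter (· ≠ i), (z k - z i) ^ 2 ≤ z ⬝ᵥ ψ.mulVec z ∧
      z ⬝ᵥ ψ.mulVec z ≤ c⁻¹ * ∑ k ∈ Finset.univ.filter (· ≠ i), (z k - z i) ^ 2 :=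
  stmt_10_general N c A hbound hcol i X hX ψ hψ
end

section
/- Let Ω be a nonempty set and let H be an ℝ-linear subspace of the functions Ω → ℝ that contains all constant functions. Let 𝔼 : H → ℝ be a sublinear expectation, i.e. 𝔼 is monotone (X ≤ Y pointwise implies 𝔼(X) ≤ 𝔼(Y)), constant-preserving (𝔼(c·𝟙) = c for all c ∈ ℝ), subadditive (𝔼(X+Y) ≤ 𝔼(X)+𝔼(Y)), and positively homogeneous (𝔼(λX) = λ𝔼(X) for all λ ≥ 0). Then: (a) for every X₀ ∈ H there exists a linear functional ℓ : H → ℝ with ℓ(X) ≤ 𝔼(X) for all X ∈ H and ℓ(X₀) = 𝔼(X₀); and (b) every linear functional ℓ : H → ℝ dominated by 𝔼 (ℓ ≤ 𝔼 on H) is monotone and constant-preserving, i.e. is a linear expectation. -/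
/-!
For (a), the sublinear `𝔼` dominates `t • X₀ ↦ t 𝔼(X₀)` on the line through `X₀`, because
`0 = 𝔼(0) ≤ 𝔼(t X₀) + 𝔼(-t X₀)`; Hahn–Banach extends this to all of `H` below `𝔼`.
For (b), `ℓ(X) - ℓ(Y) = ℓ(X - Y) ≤ 𝔼(X - Y) ≤ 𝔼(0) = 0` when `X ≤ Y`, and
`c = -𝔼(-c) ≤ -ℓ(-c) = ℓ(c) ≤ 𝔼(c) = c`.
-/

section Sublinear

variable {V : Type*} [AddCommGroup V] [Module ℝ V] {p : V → ℝ}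

theorem sublinear_map_zero (hhom : ∀ t : ℝ, 0 < t → ∀ x, p (t • x) = t * p x) : p 0 = 0 := by
  have h := hhom 2 two_pos 0
  rw [smul_zero] at h
  linarith

theorem mul_le_sublinear_smul (hhom : ∀ t : ℝ, 0 < t → ∀ x, p (t • x) = t * p x)
    (hadd : ∀ x y, p (x + y) ≤ p x + p y) (t : ℝ) (x : V) : t * p x ≤ p (t • x) := by
  rcases lt_trichotomy t 0 with ht | rfl | ht
  · have h := hadd (t • x) ((-t) • x)
    rw [← add_smul, add_neg_cancel, zero_smul, sublinear_map_zero hhom, hhom (-t) (neg_pos.2 ht)]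
      at h
    linarith
  · simp [sublinear_map_zero hhom]
  · exact (hhom t ht x).ge

theorem exists_linearMap_le_sublinear_apply_eq
    (hhom : ∀ t : ℝ, 0 < t → ∀ x, p (t • x) = t * p x) (hadd : ∀ x y, p (x + y) ≤ p x + p y)
    (x₀ : V) : ∃ ℓ : V →ₗ[ℝ] ℝ, (∀ x, ℓ x ≤ p x) ∧ ℓ x₀ = p x₀ := by
  have hker : ∀ c : ℝ, c • x₀ = 0 → c • p x₀ = 0 := by
    intro c hc
    rcases (smul_eq_zero.1 hc) with rfl | rfl
    · exact zero_smul ℝ _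
    · rw [sublinear_map_zero hhom, smul_zero]
  set f : V →ₗ.[ℝ] ℝ := LinearPMap.mkSpanSingleton' x₀ (p x₀) hker
  have hf : ∀ x : f.domain, f x ≤ p x := by
    rintro ⟨x, hx⟩
    obtain ⟨t, rfl⟩ := Submodule.mem_span_singleton.1 hx
    rw [LinearPMap.mkSpanSingleton'_apply, smul_eq_mul]
    exact mul_le_sublinear_smul hhom hadd t x₀
  obtain ⟨ℓ, hℓf, hℓp⟩ := exists_extension_of_le_sublinear f p hhom hadd hf
  exact ⟨ℓ, hℓp, (hℓf ⟨x₀, Submodule.mem_span_singleton_self x₀⟩).trans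
    (LinearPMap.mkSpanSingleton'_apply_self _ _ _ _)⟩

theorem neg_neg_le_of_le_sublinear {ℓ : V →ₗ[ℝ] ℝ} (hℓ : ∀ x, ℓ x ≤ p x) (x : V) :
    -p (-x) ≤ ℓ x := by
  have h := hℓ (-x)
  rw [map_neg] at h
  linarith

theorem monotone_of_le_of_monotone [PartialOrder V] [IsOrderedAddMonoid V] (hp : Monotone p)
    (hp0 : p 0 = 0) {ℓ : V →ₗ[ℝ] ℝ} (hℓ : ∀ x, ℓ x ≤ p x) : Monotone ℓ := by
  intro x y hxy
  have h : ℓ (x - y) ≤ 0 := (hℓ _).trans (hp0 ▸ hp (sub_nonpos.2 hxy))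
  rw [map_sub] at h
  linarith

end Sublinear

theorem stmt_11_general (Ω : Type) (H : Submodule ℝ (Ω → ℝ))
    (hconst : ∀ c : ℝ, (fun _ : Ω => c) ∈ H)
    (E : H → ℝ)
    (hmono : ∀ X Y : H, (∀ ω : Ω, (X : Ω → ℝ) ω ≤ (Y : Ω → ℝ) ω) → E X ≤ E Y)
    (hconstpres : ∀ c : ℝ, E ⟨fun _ : Ω => c, hconst c⟩ = c)
    (hsubadd : ∀ X Y : H, E (X + Y) ≤ E X + E Y)
    (hposhom : ∀ (l : ℝ) (X : H), 0 ≤ l → E (l • X) = l * E X) :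
    (∀ X₀ : H, ∃ ℓ : H →ₗ[ℝ] ℝ, (∀ X : H, ℓ X ≤ E X) ∧ ℓ X₀ = E X₀) ∧
    (∀ ℓ : H →ₗ[ℝ] ℝ, (∀ X : H, ℓ X ≤ E X) →
      ((∀ X Y : H, (∀ ω : Ω, (X : Ω → ℝ) ω ≤ (Y : Ω → ℝ) ω) → ℓ X ≤ ℓ Y) ∧
       (∀ c : ℝ, ℓ ⟨fun _ : Ω => c, hconst c⟩ = c))) := by
  have hhom : ∀ t : ℝ, 0 < t → ∀ X, E (t • X) = t * E X := fun t ht X => hposhom t X ht.le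
  refine ⟨exists_linearMap_le_sublinear_apply_eq hhom hsubadd, fun ℓ hℓ => ⟨?_, fun c => ?_⟩⟩
  · exact monotone_of_le_of_monotone hmono (sublinear_map_zero hhom) hℓ
  · have hlower := neg_neg_le_of_le_sublinear hℓ ⟨fun _ => c, hconst c⟩
    have hupper := hℓ ⟨fun _ => c, hconst c⟩
    have hneg : -(⟨fun _ => c, hconst c⟩ : H) = ⟨fun _ => -c, hconst (-c)⟩ := rfl
    rw [hneg, hconstpres] at hlower
    rw [hconstpres] at hupper
    linarith

/-- Let `H` be a linear subspace of functions `Ω → ℝ` containing the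
constants, and `𝔼 : H → ℝ` a sublinear expectation (monotone, constant-preserving,
subadditive, positively homogeneous). Then (a) for every `X₀ ∈ H` there is a linear
functional `ℓ` on `H` dominated by `𝔼` with `ℓ(X₀) = 𝔼(X₀)`, and (b) every linear
functional dominated by `𝔼` is monotone and constant-preserving (a linear
expectation). -/
theorem stmt_11 (Ω : Type) [Nonempty Ω] (H : Submodule ℝ (Ω → ℝ))
    (hconst : ∀ c : ℝ, (fun _ : Ω => c) ∈ H)
    (E : H → ℝ)
    (hmono : ∀ X Y : H, (∀ ω : Ω, (X : Ω → ℝ) ω ≤ (Y : Ω → ℝ) ω) → E X ≤ E Y)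
    (hconstpres : ∀ c : ℝ, E ⟨fun _ : Ω => c, hconst c⟩ = c)
    (hsubadd : ∀ X Y : H, E (X + Y) ≤ E X + E Y)
    (hposhom : ∀ (l : ℝ) (X : H), 0 ≤ l → E (l • X) = l * E X) :
    (∀ X₀ : H, ∃ ℓ : H →ₗ[ℝ] ℝ, (∀ X : H, ℓ X ≤ E X) ∧ ℓ X₀ = E X₀) ∧
    (∀ ℓ : H →ₗ[ℝ] ℝ, (∀ X : H, ℓ X ≤ E X) →
      ((∀ X Y : H, (∀ ω : Ω, (X : Ω → ℝ) ω ≤ (Y : Ω → ℝ) ω) → ℓ X ≤ ℓ Y) ∧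
       (∀ c : ℝ, ℓ ⟨fun _ : Ω => c, hconst c⟩ = c))) :=
  stmt_11_general Ω H hconst E hmono hconstpres hsubadd hposhom
end

section
/- Let Ω be a nonempty set and let H be an ℝ-linear subspace of the functions Ω → ℝ that contains all constant functions. A functional 𝔼 : H → ℝ is a sublinear expectation (monotone, constant-preserving, subadditive, positively homogeneous) if and only if there exists a nonempty family {𝔼_θ}_{θ∈Θ} of linear expectations on H (each a monotone, constant-preserving linear functional ℓ : H → ℝ) such that 𝔼(X) = sup_{θ∈Θ} 𝔼_θ(X) for every X ∈ H. -/
/-!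
Every linear functional dominated by a sublinear expectation `𝔼` is itself a linear expectation,
since `ℓ X - ℓ Y = ℓ (X - Y) ≤ 𝔼 (X - Y) ≤ 𝔼 0 = 0` for `X ≤ Y`, and `ℓ c ≤ c`, `-ℓ c ≤ -c`
for constants. By Hahn–Banach applied to `c • X ↦ c * 𝔼 X` on the line through `X`, for each `X`
some dominated `ℓ` attains `ℓ X = 𝔼 X`, so `𝔼` is the supremum of the family of all dominated
linear functionals. Conversely, a pointwise supremum of linear expectations inherits monotonicity,
constants, subadditivity and positive homogeneity.
-/

open Set

section Sublinear

variable {V : Type*} [AddCommGroup V] [Module ℝ V] {p : V → ℝ}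

lemma map_zero_of_sublinear (hp_smul : ∀ c : ℝ, 0 < c → ∀ x, p (c • x) = c * p x) :
    p 0 = 0 := by
  have h := hp_smul 2 two_pos 0
  rw [smul_zero] at h
  linarith

lemma map_smul_of_sublinear (hp_smul : ∀ c : ℝ, 0 < c → ∀ x, p (c • x) = c * p x)
    {c : ℝ} (hc : 0 ≤ c) (x : V) : p (c • x) = c * p x := by
  rcases hc.lt_or_eq with hc | rfl
  · exact hp_smul c hc x
  · rw [zero_smul, zero_mul, map_zero_of_sublinear hp_smul]

lemma mul_le_map_smul_of_sublinear (hp_smul : ∀ c : ℝ, 0 < c → ∀ x, p (c • x) = c * p x)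
    (hp_add : ∀ x y, p (x + y) ≤ p x + p y) (c : ℝ) (x : V) : c * p x ≤ p (c • x) := by
  rcases le_total 0 c with hc | hc
  · exact (map_smul_of_sublinear hp_smul hc x).ge
  · have h := hp_add (c • x) ((-c) • x)
    rw [← add_smul, add_neg_cancel, zero_smul, map_zero_of_sublinear hp_smul,
      map_smul_of_sublinear hp_smul (neg_nonneg.2 hc)] at h
    linarith

theorem exists_linearMap_le_sublinear_eq (hp_smul : ∀ c : ℝ, 0 < c → ∀ x, p (c • x) = c * p x)
    (hp_add : ∀ x y, p (x + y) ≤ p x + p y) (x₀ : V) :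
    ∃ g : V →ₗ[ℝ] ℝ, (∀ x, g x ≤ p x) ∧ g x₀ = p x₀ := by
  have hp_le := mul_le_map_smul_of_sublinear hp_smul hp_add
  have hker : ∀ c : ℝ, c • x₀ = 0 → c • p x₀ = 0 := by
    intro c hc
    have h₁ := hp_le c x₀
    have h₂ := hp_le (-c) x₀
    rw [neg_smul, hc, neg_zero, map_zero_of_sublinear hp_smul] at h₂
    rw [hc, map_zero_of_sublinear hp_smul] at h₁
    rw [smul_eq_mul]
    linarith
  set f := LinearPMap.mkSpanSingleton' (σ := RingHom.id ℝ) x₀ (p x₀) hker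
  have hf : ∀ x : f.domain, f x ≤ p x := by
    rintro ⟨x, hx⟩
    obtain ⟨c, rfl⟩ := Submodule.mem_span_singleton.1 hx
    rw [LinearPMap.mkSpanSingleton'_apply]
    exact hp_le c x₀
  obtain ⟨g, hgf, hgp⟩ := exists_extension_of_le_sublinear f p hp_smul hp_add hf
  refine ⟨g, hgp, ?_⟩
  have hx₀ : x₀ ∈ f.domain := Submodule.mem_span_singleton_self x₀
  rw [hgf ⟨x₀, hx₀⟩, LinearPMap.mkSpanSingleton'_apply_self]

theorem isLUB_range_linearMap_le_sublinear
    (hp_smul : ∀ c : ℝ, 0 < c → ∀ x, p (c • x) = c * p x)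
    (hp_add : ∀ x y, p (x + y) ≤ p x + p y) (x : V) :
    IsLUB (range fun g : {g : V →ₗ[ℝ] ℝ // ∀ y, g y ≤ p y} => g.1 x) (p x) := by
  refine ⟨?_, fun b hb => ?_⟩
  · rintro _ ⟨g, rfl⟩
    exact g.2 x
  · obtain ⟨g, hgp, hgx⟩ := exists_linearMap_le_sublinear_eq hp_smul hp_add x
    exact hgx ▸ hb ⟨⟨g, hgp⟩, rfl⟩

lemma LinearMap.monotone_of_le_monotone [PartialOrder V] [IsOrderedAddMonoid V]
    {g : V →ₗ[ℝ] ℝ} (hgp : ∀ x, g x ≤ p x) (hp : Monotone p) (hp_zero : p 0 = 0) :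
    Monotone g := by
  intro x y hxy
  have h : g (x - y) ≤ p 0 := (hgp _).trans (hp (sub_nonpos.2 hxy))
  rw [map_sub, hp_zero] at h
  linarith

lemma LinearMap.eq_of_le_of_map_neg {g : V →ₗ[ℝ] ℝ} (hgp : ∀ x, g x ≤ p x) {x : V}
    (hp_neg : p (-x) = -p x) : g x = p x := by
  have h := hgp (-x)
  rw [map_neg, hp_neg] at h
  exact le_antisymm (hgp x) (by linarith)

end Sublinear

section Supremum

variable {V Θ : Type*} [AddCommGroup V] [Module ℝ V] {L : Θ → V →ₗ[ℝ] ℝ} {p : V → ℝ}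

lemma map_add_le_of_isLUB_range_linearMap (hp : ∀ x, IsLUB (range fun θ => L θ x) (p x))
    (x y : V) : p (x + y) ≤ p x + p y := by
  refine (hp (x + y)).2 ?_
  rintro _ ⟨θ, rfl⟩
  simp only [map_add]
  exact add_le_add ((hp x).1 ⟨θ, rfl⟩) ((hp y).1 ⟨θ, rfl⟩)

lemma map_smul_of_isLUB_range_linearMap (hp : ∀ x, IsLUB (range fun θ => L θ x) (p x))
    {c : ℝ} (hc : 0 ≤ c) (x : V) : p (c • x) = c * p x := by
  refine (hp (c • x)).unique ?_
  have h := (hp x).mul_left hc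
  rw [← range_comp] at h
  convert h using 3 with θ
  simp

end Supremum

lemma monotone_of_isLUB_range {Θ α β : Type*} [Preorder α] [Preorder β] {f : Θ → α → β}
    {p : α → β} (hp : ∀ x, IsLUB (range fun θ => f θ x) (p x)) (hf : ∀ θ, Monotone (f θ)) :
    Monotone p := by
  intro x y hxy
  refine (hp x).2 ?_
  rintro _ ⟨θ, rfl⟩
  exact (hf θ hxy).trans ((hp y).1 ⟨θ, rfl⟩)

lemma eq_of_isLUB_range_const {Θ α : Type*} [PartialOrder α] [NoBotOrder α] {c a : α}
    (h : IsLUB (range fun _ : Θ => c) a) : a = c := by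
  have : Nonempty Θ := range_nonempty_iff_nonempty.1 h.nonempty
  rw [range_const] at h
  exact h.unique isLUB_singleton

theorem stmt_12_general (Ω : Type) (H : Submodule ℝ (Ω → ℝ))
    (hconst : ∀ c : ℝ, (fun _ : Ω => c) ∈ H)
    (E : H → ℝ) :
    ((∀ X Y : H, (∀ ω : Ω, (X : Ω → ℝ) ω ≤ (Y : Ω → ℝ) ω) → E X ≤ E Y) ∧
     (∀ c : ℝ, E ⟨fun _ : Ω => c, hconst c⟩ = c) ∧
     (∀ X Y : H, E (X + Y) ≤ E X + E Y) ∧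
     (∀ (l : ℝ) (X : H), 0 ≤ l → E (l • X) = l * E X)) ↔
    (∃ (Θ : Type) (_ : Nonempty Θ) (L : Θ → (H →ₗ[ℝ] ℝ)),
      (∀ θ : Θ,
        (∀ X Y : H, (∀ ω : Ω, (X : Ω → ℝ) ω ≤ (Y : Ω → ℝ) ω) → L θ X ≤ L θ Y) ∧
        (∀ c : ℝ, L θ ⟨fun _ : Ω => c, hconst c⟩ = c)) ∧
      (∀ X : H, IsLUB (Set.range fun θ : Θ => L θ X) (E X))) := by
  constructor
  · rintro ⟨hmono, hE_const, hE_add, hE_smul⟩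
    have hE_smul' : ∀ c : ℝ, 0 < c → ∀ X, E (c • X) = c * E X := fun c hc X => hE_smul c X hc.le
    have hE_zero : E 0 = 0 := map_zero_of_sublinear hE_smul'
    have hlub := isLUB_range_linearMap_le_sublinear hE_smul' hE_add
    refine ⟨{g : H →ₗ[ℝ] ℝ // ∀ X, g X ≤ E X}, range_nonempty_iff_nonempty.1 (hlub 0).nonempty,
      fun g => g.1, fun g => ⟨fun _ _ h => g.1.monotone_of_le_monotone g.2 hmono hE_zero h,
      fun c => ?_⟩, hlub⟩
    have hE_neg : E (-⟨fun _ => c, hconst c⟩) = -E ⟨fun _ => c, hconst c⟩ := by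
      rw [hE_const c]
      exact hE_const (-c)
    exact (g.1.eq_of_le_of_map_neg g.2 hE_neg).trans (hE_const c)
  · rintro ⟨Θ, -, L, hL, hlub⟩
    exact ⟨monotone_of_isLUB_range hlub fun θ => (hL θ).1,
      fun c => eq_of_isLUB_range_const (by simpa only [(hL _).2] using hlub ⟨_, hconst c⟩),
      map_add_le_of_isLUB_range_linearMap hlub,
      fun _ _ hl => map_smul_of_isLUB_range_linearMap hlub hl _⟩

/-- A functional `𝔼 : H → ℝ` on a linear subspace `H` of functions
`Ω → ℝ` containing the constants is a sublinear expectation (monotone,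
constant-preserving, subadditive, positively homogeneous) iff there exists a
nonempty family of linear expectations `{𝔼_θ}` on `H` (monotone, constant-preserving
linear functionals) with `𝔼(X) = sup_θ 𝔼_θ(X)` for every `X ∈ H`. -/
theorem stmt_12 (Ω : Type) [Nonempty Ω] (H : Submodule ℝ (Ω → ℝ))
    (hconst : ∀ c : ℝ, (fun _ : Ω => c) ∈ H)
    (E : H → ℝ) :
    ((∀ X Y : H, (∀ ω : Ω, (X : Ω → ℝ) ω ≤ (Y : Ω → ℝ) ω) → E X ≤ E Y) ∧
     (∀ c : ℝ, E ⟨fun _ : Ω => c, hconst c⟩ = c) ∧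
     (∀ X Y : H, E (X + Y) ≤ E X + E Y) ∧
     (∀ (l : ℝ) (X : H), 0 ≤ l → E (l • X) = l * E X)) ↔
    (∃ (Θ : Type) (_ : Nonempty Θ) (L : Θ → (H →ₗ[ℝ] ℝ)),
      (∀ θ : Θ,
        (∀ X Y : H, (∀ ω : Ω, (X : Ω → ℝ) ω ≤ (Y : Ω → ℝ) ω) → L θ X ≤ L θ Y) ∧
        (∀ c : ℝ, L θ ⟨fun _ : Ω => c, hconst c⟩ = c)) ∧
      (∀ X : H, IsLUB (Set.range fun θ : Θ => L θ X) (E X))) :=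
  stmt_12_general Ω H hconst E
end

section
/- Let T > 0 and μ₀ > 0, and let (φ_n)_{n≥1} be a sequence of continuous nonnegative functions [0,T] → ℝ such that φ₁ is nonincreasing and, for every n ≥ 1 and every t ∈ [0,T], φ_{n+1}(t) ≤ μ₀ ∫_t^T e^{μ₀(s−t)} φ_n(s) ds. Then for every n ≥ 1 and every t ∈ [0,T], φ_{n+1}(t) ≤ ((T μ₀ e^{T μ₀})^n / n!) · φ₁(t). -/
/-!
Induction on `n` gives the sharper bound
`φ_{n+1}(t) ≤ (μ₀ e^{Tμ₀})^n (T - t)^n / n! · φ₁(t)`: in the recursive inequality bound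
`e^{μ₀(s-t)}` by `e^{Tμ₀}` and `φ₁(s)` by `φ₁(t)` (as `s ≥ t` and `φ₁` is nonincreasing), and the
factorial comes from `∫_t^T (T - s)^n ds = (T - t)^{n+1}/(n+1)`. Finally `T - t ≤ T`.
-/

open Set Real intervalIntegral

theorem integral_sub_pow (t T : ℝ) (n : ℕ) :
    ∫ s in t..T, (T - s) ^ n = (T - t) ^ (n + 1) / (n + 1) := by
  rw [integral_comp_sub_left (fun x : ℝ => x ^ n) T, sub_self, integral_pow,
    zero_pow n.succ_ne_zero, sub_zero]

theorem mul_integral_exp_mul_le_of_le_pow {μ t T K : ℝ} {g : ℝ → ℝ} (n : ℕ)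
    (hμ : 0 ≤ μ) (ht : 0 ≤ t) (htT : t ≤ T) (hK : 0 ≤ K) (hg : ContinuousOn g (Icc t T))
    (hle : ∀ s ∈ Icc t T, g s ≤ K * (T - s) ^ n) :
    μ * ∫ s in t..T, exp (μ * (s - t)) * g s ≤
      μ * exp (T * μ) * K * (T - t) ^ (n + 1) / (n + 1) := by
  have hpointwise :
      ∀ s ∈ Icc t T, exp (μ * (s - t)) * g s ≤ exp (T * μ) * (K * (T - s) ^ n) := by
    intro s ⟨hts, hsT⟩
    have hexp : exp (μ * (s - t)) ≤ exp (T * μ) := exp_le_exp.mpr (by nlinarith)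
    have hbound : 0 ≤ K * (T - s) ^ n := mul_nonneg hK (pow_nonneg (by linarith) n)
    calc exp (μ * (s - t)) * g s ≤ exp (μ * (s - t)) * (K * (T - s) ^ n) :=
          mul_le_mul_of_nonneg_left (hle s ⟨hts, hsT⟩) (exp_pos _).le
      _ ≤ exp (T * μ) * (K * (T - s) ^ n) := mul_le_mul_of_nonneg_right hexp hbound
  have hint : IntervalIntegrable (fun s => exp (μ * (s - t)) * g s) MeasureTheory.volume t T := by
    refine ContinuousOn.intervalIntegrable ?_
    rw [uIcc_of_le htT]
    exact (by fun_prop : Continuous fun s => exp (μ * (s - t))).continuousOn.mul hg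
  have hbound_int : IntervalIntegrable (fun s => exp (T * μ) * (K * (T - s) ^ n))
      MeasureTheory.volume t T :=
    (by fun_prop : Continuous fun s => exp (T * μ) * (K * (T - s) ^ n)).intervalIntegrable t T
  have hmono := integral_mono_on htT hint hbound_int hpointwise
  rw [integral_const_mul, integral_const_mul, integral_sub_pow] at hmono
  calc μ * ∫ s in t..T, exp (μ * (s - t)) * g s
      ≤ μ * (exp (T * μ) * (K * ((T - t) ^ (n + 1) / (n + 1)))) :=
        mul_le_mul_of_nonneg_left hmono hμ
    _ = μ * exp (T * μ) * K * (T - t) ^ (n + 1) / (n + 1) := by ring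

theorem le_pow_div_factorial_mul_of_le_integral_exp {T μ₀ : ℝ} (hμ₀ : 0 ≤ μ₀) {φ : ℕ → ℝ → ℝ}
    (hcont : ∀ n : ℕ, 1 ≤ n → ContinuousOn (φ n) (Icc 0 T))
    (hnonneg : ∀ t ∈ Icc (0 : ℝ) T, 0 ≤ φ 1 t)
    (hanti : AntitoneOn (φ 1) (Icc 0 T))
    (hrec : ∀ n : ℕ, 1 ≤ n → ∀ t ∈ Icc (0 : ℝ) T,
      φ (n + 1) t ≤ μ₀ * ∫ s in t..T, exp (μ₀ * (s - t)) * φ n s)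
    (n : ℕ) {t : ℝ} (ht : t ∈ Icc 0 T) :
    φ (n + 1) t ≤ (μ₀ * exp (T * μ₀)) ^ n / n.factorial * (T - t) ^ n * φ 1 t := by
  induction n generalizing t with
  | zero => simp
  | succ n ih =>
    obtain ⟨ht0, htT⟩ := ht
    set K := (μ₀ * exp (T * μ₀)) ^ n / n.factorial * φ 1 t with hK
    have hle : ∀ s ∈ Icc t T, φ (n + 1) s ≤ K * (T - s) ^ n := by
      intro s ⟨hts, hsT⟩
      have hs : s ∈ Icc 0 T := ⟨ht0.trans hts, hsT⟩
      calc φ (n + 1) s ≤ (μ₀ * exp (T * μ₀)) ^ n / n.factorial * (T - s) ^ n * φ 1 s := ih hs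
        _ ≤ (μ₀ * exp (T * μ₀)) ^ n / n.factorial * (T - s) ^ n * φ 1 t := by
          have := sub_nonneg.mpr hsT
          gcongr
          exact hanti ⟨ht0, htT⟩ hs hts
        _ = K * (T - s) ^ n := by ring
    have hcont' : ContinuousOn (φ (n + 1)) (Icc t T) :=
      (hcont (n + 1) (Nat.le_add_left 1 n)).mono (Icc_subset_Icc_left ht0)
    calc φ (n + 1 + 1) t ≤ μ₀ * ∫ s in t..T, exp (μ₀ * (s - t)) * φ (n + 1) s :=
          hrec (n + 1) (Nat.le_add_left 1 n) t ⟨ht0, htT⟩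
      _ ≤ μ₀ * exp (T * μ₀) * K * (T - t) ^ (n + 1) / (n + 1) :=
          mul_integral_exp_mul_le_of_le_pow n hμ₀ ht0 htT
            (by have := hnonneg t ⟨ht0, htT⟩; positivity) hcont' hle
      _ = (μ₀ * exp (T * μ₀)) ^ (n + 1) / (n + 1).factorial * (T - t) ^ (n + 1) * φ 1 t := by
          rw [hK, Nat.factorial_succ]
          push_cast
          field_simp
          ring

theorem stmt_13_general (T μ₀ : ℝ) (hμ₀ : 0 < μ₀)
    (φ : ℕ → ℝ → ℝ)
    (hcont : ∀ n : ℕ, 1 ≤ n → ContinuousOn (φ n) (Set.Icc 0 T))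
    (hnonneg : ∀ n : ℕ, 1 ≤ n → ∀ t ∈ Set.Icc (0 : ℝ) T, 0 ≤ φ n t)
    (hanti : AntitoneOn (φ 1) (Set.Icc 0 T))
    (hrec : ∀ n : ℕ, 1 ≤ n → ∀ t ∈ Set.Icc (0 : ℝ) T,
      φ (n + 1) t ≤ μ₀ * ∫ s in t..T, Real.exp (μ₀ * (s - t)) * φ n s) :
    ∀ n : ℕ, 1 ≤ n → ∀ t ∈ Set.Icc (0 : ℝ) T,
      φ (n + 1) t ≤ (T * μ₀ * Real.exp (T * μ₀)) ^ n / (Nat.factorial n : ℝ) * φ 1 t := by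
  intro n _ t ht
  have hφ₁ := hnonneg 1 le_rfl
  calc φ (n + 1) t ≤ (μ₀ * exp (T * μ₀)) ^ n / n.factorial * (T - t) ^ n * φ 1 t :=
        le_pow_div_factorial_mul_of_le_integral_exp hμ₀.le hcont hφ₁ hanti hrec n ht
    _ = ((T - t) * (μ₀ * exp (T * μ₀))) ^ n / n.factorial * φ 1 t := by
        rw [mul_pow (T - t)]; ring
    _ ≤ (T * (μ₀ * exp (T * μ₀))) ^ n / n.factorial * φ 1 t := by
        have := hφ₁ t ht
        have := sub_nonneg.mpr ht.2
        gcongr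
        linarith [ht.1]
    _ = (T * μ₀ * exp (T * μ₀)) ^ n / n.factorial * φ 1 t := by rw [mul_assoc]

/-- If `(φ_n)_{n ≥ 1}` are continuous nonnegative functions on
`[0,T]`, `φ₁` is nonincreasing, and
`φ_{n+1}(t) ≤ μ₀ ∫_t^T e^{μ₀(s−t)} φ_n(s) ds` for all `n ≥ 1`, `t ∈ [0,T]`, then
`φ_{n+1}(t) ≤ ((T μ₀ e^{T μ₀})^n / n!) · φ₁(t)` for all `n ≥ 1`, `t ∈ [0,T]`. -/
theorem stmt_13 (T μ₀ : ℝ) (hT : 0 < T) (hμ₀ : 0 < μ₀)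
    (φ : ℕ → ℝ → ℝ)
    (hcont : ∀ n : ℕ, 1 ≤ n → ContinuousOn (φ n) (Set.Icc 0 T))
    (hnonneg : ∀ n : ℕ, 1 ≤ n → ∀ t ∈ Set.Icc (0 : ℝ) T, 0 ≤ φ n t)
    (hanti : AntitoneOn (φ 1) (Set.Icc 0 T))
    (hrec : ∀ n : ℕ, 1 ≤ n → ∀ t ∈ Set.Icc (0 : ℝ) T,
      φ (n + 1) t ≤ μ₀ * ∫ s in t..T, Real.exp (μ₀ * (s - t)) * φ n s) :
    ∀ n : ℕ, 1 ≤ n → ∀ t ∈ Set.Icc (0 : ℝ) T,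
      φ (n + 1) t ≤ (T * μ₀ * Real.exp (T * μ₀)) ^ n / (Nat.factorial n : ℝ) * φ 1 t :=
  stmt_13_general T μ₀ hμ₀ φ hcont hnonneg hanti hrec
end
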